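/- Let G be a group generated by a finite set S, equipped with the word metric d_S, let H ≤ G be a subgroup, and let n be a natural number. Then e(G,H) ≥ n if and only if there exist n deep, pairwise coarse disjoint, coarse complementary components C_1, …, C_n of H such that H·C_i = C_i for each i. -/
import Mathlib


open Metric Set
open scoped NNReal Pointwise

/-- The closed `r`-neighbourhood `N_r(A)` of a subset `A` of a metric space. -/
def nbhd {X : Type*} [PseudoMetricSpace X] (r : ℝ≥0) (A : Set X) : Set X :=
  {x : X | ∃ a ∈ A, nndist x a ≤ r}

/-- The word length of `g` with respect to a generating set `S`: the least `n` such
that `g` is a product of `n` elements of `S ∪ S⁻¹`. -/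
noncomputable def wordLength {G : Type*} [Group G] (S : Set G) (g : G) : ℕ :=
  sInf {n : ℕ | ∃ l : List G, (∀ x ∈ l, x ∈ S ∨ x⁻¹ ∈ S) ∧ l.prod = g ∧ l.length = n}

/-- The metric on `G` is the word metric with respect to `S`. -/
def IsWordMetric {G : Type*} [Group G] [MetricSpace G] (S : Set G) : Prop :=
  ∀ g h : G, dist g h = wordLength S (g⁻¹ * h)

/-- A subset `A ⊆ G` is `H`-finite if `A ⊆ H·R` for some finite `R ⊆ G`. -/
def HFinite {G : Type*} [Group G] (H : Subgroup G) (A : Set G) : Prop :=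
  ∃ R : Set G, R.Finite ∧ A ⊆ (H : Set G) * R

/-- The coarse `r`-boundary `∂_r C := {x ∈ X \ C : d(x,C) ≤ r}`. -/
def coarseBoundary {X : Type*} [PseudoMetricSpace X] (r : ℝ≥0) (C : Set X) : Set X :=
  {x : X | x ∉ C ∧ ∃ c ∈ C, nndist x c ≤ r}

/-- `C` is an `(r,A)`-coarse complementary component of `W`:
`∂_r (C \ N_A(W)) ⊆ N_A(W)`. -/
def IsCCC {X : Type*} [PseudoMetricSpace X] (r A : ℝ≥0) (W C : Set X) : Prop :=
  coarseBoundary r (C \ nbhd A W) ⊆ nbhd A W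

/-- `C` is a coarse complementary component of `W`, i.e. an `(r,A)`-coarse complementary
component for some `r ≥ 1`, `A ≥ 0`. -/
def IsCoarseCompComplement {X : Type*} [PseudoMetricSpace X] (W C : Set X) : Prop :=
  ∃ r A : ℝ≥0, 1 ≤ r ∧ IsCCC r A W C

/-- A coarse complementary component is shallow if contained in some neighbourhood of
`W`, and deep otherwise. -/
def IsShallow {X : Type*} [PseudoMetricSpace X] (W C : Set X) : Prop :=
  ∃ R : ℝ≥0, C ⊆ nbhd R W

/-- The right coset space `H\G`. -/
abbrev RightCoset {G : Type*} [Group G] (H : Subgroup G) :=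
  Quotient (QuotientGroup.rightRel H)

/-- Right translation `Hx ↦ Hxg` on the right coset space `H\G`. -/
def rcosMul {G : Type*} [Group G] (H : Subgroup G) (g : G) :
    RightCoset H → RightCoset H :=
  Quotient.map' (fun x => x * g) (by
    intro a b hab
    rw [QuotientGroup.rightRel_apply] at hab ⊢
    simpa [mul_inv_rev, mul_assoc] using hab)

/-- `F(H\G)`: the subspace of `P(H\G) = (H\G → ℤ/2)` consisting of (indicator
functions of) finite subsets of `H\G`. -/
def finiteSupport (α : Type*) : Submodule (ZMod 2) (α → ZMod 2) where
  carrier := {f | {a : α | f a ≠ 0}.Finite}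
  add_mem' := by
    rintro f g hf hg
    refine (hf.union hg).subset ?_
    intro a ha
    by_contra h
    simp only [Set.mem_union, Set.mem_setOf_eq, not_or, not_not] at h
    exact ha (by simp [Set.mem_setOf_eq, Pi.add_apply, h.1, h.2])
  zero_mem' := by
    have : {a : α | (0 : α → ZMod 2) a ≠ 0} = ∅ := by
      ext a; simp
    simp only [Set.mem_setOf_eq, this]
    exact Set.finite_empty
  smul_mem' := by
    intro c f hf
    refine hf.subset ?_
    intro a ha
    by_contra h
    simp only [Set.mem_setOf_eq, not_not] at h
    exact ha (by simp [Set.mem_setOf_eq, Pi.smul_apply, h])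

lemma rcosMul_rcosMul {G : Type*} [Group G] (H : Subgroup G) (g g' : G)
    (q : RightCoset H) : rcosMul H g (rcosMul H g' q) = rcosMul H (g' * g) q := by
  induction q using Quotient.inductionOn' with
  | h x => simp [rcosMul, Quotient.map'_mk'', mul_assoc]

lemma rcosMul_injective {G : Type*} [Group G] (H : Subgroup G) (g : G) :
    Function.Injective (rcosMul H g) := by
  apply Function.LeftInverse.injective (g := rcosMul H g⁻¹)
  intro q
  rw [rcosMul_rcosMul]
  induction q using Quotient.inductionOn' with
  | h x => simp [rcosMul, Quotient.map'_mk'']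

/-- The right-translation action `C ↦ Cg` of `g ∈ G` on `P(H\G)/F(H\G)`. -/
noncomputable def endsMap {G : Type*} [Group G] (H : Subgroup G) (g : G) :
    ((RightCoset H → ZMod 2) ⧸ finiteSupport (RightCoset H)) →ₗ[ZMod 2]
      ((RightCoset H → ZMod 2) ⧸ finiteSupport (RightCoset H)) :=
  Submodule.mapQ _ _ (LinearMap.funLeft (ZMod 2) (ZMod 2) (rcosMul H g⁻¹))
    (by
      intro f hf
      have : {c : RightCoset H | f (rcosMul H g⁻¹ c) ≠ 0} =
          rcosMul H g⁻¹ ⁻¹' {c : RightCoset H | f c ≠ 0} := rfl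
      show {c : RightCoset H | f (rcosMul H g⁻¹ c) ≠ 0}.Finite
      rw [this]
      exact Set.Finite.preimage (rcosMul_injective H g⁻¹).injOn hf)

/-- The subspace of `G`-fixed vectors of `P(H\G)/F(H\G)`; its `ℤ/2`-dimension is the
number of relative ends `e(G,H)` of Houghton and Scott. -/
noncomputable def endsFixed {G : Type*} [Group G] (H : Subgroup G) :
    Submodule (ZMod 2) ((RightCoset H → ZMod 2) ⧸ finiteSupport (RightCoset H)) where
  carrier := {v | ∀ g : G, endsMap H g v = v}
  add_mem' := by
    intro u v hu hv g
    rw [map_add, hu g, hv g]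
  zero_mem' := by
    intro g
    exact map_zero _
  smul_mem' := by
    intro c v hv g
    rw [map_smul, hv g]

section WordLength

variable {G : Type*} [Group G] {S : Set G}

lemma wordLength_le {g : G} {l : List G} (hl : ∀ x ∈ l, x ∈ S ∨ x⁻¹ ∈ S)
    (hp : l.prod = g) : wordLength S g ≤ l.length :=
  Nat.sInf_le ⟨l, hl, hp, rfl⟩

lemma exists_wordLength_list (hS : Subgroup.closure S = ⊤) (g : G) :
    ∃ l : List G, (∀ x ∈ l, x ∈ S ∨ x⁻¹ ∈ S) ∧ l.prod = g ∧ l.length = wordLength S g := by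
  have hg : g ∈ Submonoid.closure (S ∪ S⁻¹) := by
    rw [← Subgroup.closure_toSubmonoid, hS]; trivial
  obtain ⟨l, hl, hp⟩ := Submonoid.exists_list_of_mem_closure hg
  have hl' : ∀ x ∈ l, x ∈ S ∨ x⁻¹ ∈ S := by
    intro x hx
    rcases hl x hx with h | h
    · exact Or.inl h
    · exact Or.inr (Set.mem_inv.mp h)
  have hne : {n : ℕ | ∃ l : List G, (∀ x ∈ l, x ∈ S ∨ x⁻¹ ∈ S) ∧ l.prod = g ∧ l.length = n}.Nonempty :=
    ⟨l.length, l, hl', hp, rfl⟩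
  exact Nat.sInf_mem hne

lemma wordLength_one : wordLength S (1 : G) = 0 :=
  Nat.le_zero.mp (wordLength_le (l := []) (by simp) (by simp))

lemma eq_one_of_wordLength_eq_zero (hS : Subgroup.closure S = ⊤) {g : G}
    (h : wordLength S g = 0) : g = 1 := by
  obtain ⟨l, -, hp, hlen⟩ := exists_wordLength_list hS g
  rw [h, List.length_eq_zero_iff] at hlen
  rw [hlen] at hp
  simpa using hp.symm

lemma wordLength_inv_le (hS : Subgroup.closure S = ⊤) (g : G) :
    wordLength S g⁻¹ ≤ wordLength S g := by
  obtain ⟨l, hl, hp, hlen⟩ := exists_wordLength_list hS g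
  have := wordLength_le (S := S) (g := g⁻¹) (l := (l.map fun x => x⁻¹).reverse) ?_ ?_
  · simpa [hlen] using this
  · intro x hx
    simp only [List.mem_reverse, List.mem_map] at hx
    obtain ⟨y, hy, rfl⟩ := hx
    rcases hl y hy with h | h
    · exact Or.inr (by simpa using h)
    · exact Or.inl h
  · rw [← List.prod_inv_reverse, hp]

lemma wordLength_inv (hS : Subgroup.closure S = ⊤) (g : G) :
    wordLength S g⁻¹ = wordLength S g :=
  le_antisymm (wordLength_inv_le hS g) (by simpa using wordLength_inv_le hS g⁻¹)

end WordLength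
section Ball

variable {G : Type*} [Group G] {S : Set G}

lemma list_prod_mem_pow {U : Set G} : ∀ l : List G, (∀ x ∈ l, x ∈ U) → l.prod ∈ U ^ l.length := by
  intro l
  induction l with
  | nil => simp
  | cons a l ih =>
    intro h
    rw [List.prod_cons, List.length_cons, pow_succ']
    exact Set.mul_mem_mul (h a (by simp)) (ih fun x hx => h x (List.mem_cons_of_mem a hx))

lemma set_finite_pow {U : Set G} (h : U.Finite) (n : ℕ) : (U ^ n : Set G).Finite := by
  induction n with
  | zero => simpa using Set.finite_singleton (1 : G)
  | succ n ih => rw [pow_succ]; exact ih.mul h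

lemma wordBall_finite (hSfin : S.Finite) (hS : Subgroup.closure S = ⊤) (N : ℕ) :
    {g : G | wordLength S g ≤ N}.Finite := by
  set U : Set G := insert 1 (S ∪ S⁻¹) with hU
  have hUfin : U.Finite := (hSfin.union hSfin.inv).insert 1
  have hsub : {g : G | wordLength S g ≤ N} ⊆ U ^ N := by
    intro g hg
    obtain ⟨l, hl, hp, hlen⟩ := exists_wordLength_list hS g
    have hmem : l.prod ∈ U ^ l.length :=
      list_prod_mem_pow l (by
        intro x hx
        rcases hl x hx with h | h
        · exact Set.mem_insert_iff.mpr (Or.inr (Set.mem_union_left _ h))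
        · exact Set.mem_insert_iff.mpr (Or.inr (Set.mem_union_right _ (Set.mem_inv.mpr h))))
    rw [hp] at hmem
    exact Set.pow_subset_pow_right (Set.mem_insert 1 _) (hlen ▸ hg : l.length ≤ N) hmem
  exact (set_finite_pow hUfin N).subset hsub

end Ball

section Nbhd

variable {G : Type*} [Group G] [MetricSpace G] {S : Set G}

lemma nndist_le_iff_wordLength (hword : IsWordMetric S) (x y : G) (r : ℝ≥0) :
    nndist x y ≤ r ↔ (wordLength S (x⁻¹ * y) : ℝ) ≤ r := by
  rw [← NNReal.coe_le_coe, coe_nndist, hword x y]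

lemma nbhd_subgroup_subset (hword : IsWordMetric S) (hS : Subgroup.closure S = ⊤)
    (H : Subgroup G) (r : ℝ≥0) :
    nbhd r (H : Set G) ⊆ (H : Set G) * {g : G | wordLength S g ≤ ⌈(r : ℝ)⌉₊} := by
  rintro x ⟨h, hh, hd⟩
  refine ⟨h, hh, h⁻¹ * x, ?_, by group⟩
  have h1 : (wordLength S (x⁻¹ * h) : ℝ) ≤ r := (nndist_le_iff_wordLength hword x h r).mp hd
  have h2 : wordLength S (x⁻¹ * h) ≤ ⌈(r : ℝ)⌉₊ := by
    exact_mod_cast h1.trans (Nat.le_ceil _)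
  have h3 : h⁻¹ * x = (x⁻¹ * h)⁻¹ := by group
  rw [Set.mem_setOf_eq, h3, wordLength_inv hS]
  exact h2

/-- `nbhd r H` is `HFinite`. -/
lemma hfinite_nbhd (hSfin : S.Finite) (hS : Subgroup.closure S = ⊤)
    (hword : IsWordMetric S) (H : Subgroup G) (r : ℝ≥0) :
    HFinite H (nbhd r (H : Set G)) :=
  ⟨{g : G | wordLength S g ≤ ⌈(r : ℝ)⌉₊}, wordBall_finite hSfin hS _,
    nbhd_subgroup_subset hword hS H r⟩

/-- `HFinite` sets are contained in some neighbourhood of `H`. -/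
lemma hfinite_subset_nbhd (hword : IsWordMetric S) (hS : Subgroup.closure S = ⊤)
    {H : Subgroup G} {D : Set G} (hD : HFinite H D) :
    ∃ r : ℝ≥0, D ⊆ nbhd r (H : Set G) := by
  obtain ⟨R, hRfin, hsub⟩ := hD
  refine ⟨(hRfin.toFinset.sup (wordLength S) : ℕ), ?_⟩
  rintro x hx
  obtain ⟨h, hh, b, hb, rfl⟩ := hsub hx
  refine ⟨h, hh, ?_⟩
  rw [nndist_le_iff_wordLength hword]
  have : (h * b)⁻¹ * h = b⁻¹ := by group
  rw [this, wordLength_inv hS]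
  have : wordLength S b ≤ hRfin.toFinset.sup (wordLength S) :=
    Finset.le_sup (hRfin.mem_toFinset.mpr hb)
  exact_mod_cast this

lemma shallow_iff_hfinite (hSfin : S.Finite) (hS : Subgroup.closure S = ⊤)
    (hword : IsWordMetric S) (H : Subgroup G) (D : Set G) :
    IsShallow (H : Set G) D ↔ HFinite H D := by
  constructor
  · rintro ⟨R, hR⟩
    obtain ⟨B, hBfin, hBsub⟩ := hfinite_nbhd hSfin hS hword H R
    exact ⟨B, hBfin, hR.trans hBsub⟩
  · intro hD
    obtain ⟨r, hr⟩ := hfinite_subset_nbhd hword hS hD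
    exact ⟨r, hr⟩

end Nbhd
section Coset

variable {G : Type*} [Group G] {H : Subgroup G}

lemma rcos_mk_eq_iff (x y : G) :
    (Quotient.mk'' x : RightCoset H) = Quotient.mk'' y ↔ y * x⁻¹ ∈ H := by
  rw [Quotient.eq'', QuotientGroup.rightRel_apply]

lemma rcos_mk_smul {h : G} (hh : h ∈ H) (x : G) :
    (Quotient.mk'' (h * x) : RightCoset H) = Quotient.mk'' x := by
  rw [rcos_mk_eq_iff]
  simpa using hh

lemma rcosMul_mk (g x : G) :
    rcosMul H g (Quotient.mk'' x) = (Quotient.mk'' (x * g) : RightCoset H) := rfl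

lemma image_finite_of_hfinite {D : Set G} (hD : HFinite H D) :
    ((Quotient.mk'' : G → RightCoset H) '' D).Finite := by
  obtain ⟨R, hRfin, hsub⟩ := hD
  refine (hRfin.image (Quotient.mk'' : G → RightCoset H)).subset ?_
  rintro q ⟨x, hx, rfl⟩
  obtain ⟨h, hh, b, hb, rfl⟩ := hsub hx
  exact ⟨b, hb, (rcos_mk_smul hh b).symm⟩

lemma hfinite_of_image_finite {D : Set G}
    (hD : ((Quotient.mk'' : G → RightCoset H) '' D).Finite) : HFinite H D := by
  refine ⟨Quotient.out '' ((Quotient.mk'' : G → RightCoset H) '' D), hD.image _, ?_⟩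
  intro x hx
  set q : RightCoset H := Quotient.mk'' x with hq
  have hout : (Quotient.mk'' (Quotient.out q) : RightCoset H) = q := by
    exact Quotient.out_eq' q
  have hmem : Quotient.out q ∈ Quotient.out '' ((Quotient.mk'' : G → RightCoset H) '' D) :=
    ⟨q, ⟨x, hx, rfl⟩, rfl⟩
  have hrel : x * (Quotient.out q)⁻¹ ∈ H := by
    rw [← rcos_mk_eq_iff (H := H)]
    exact hout
  exact ⟨x * (Quotient.out q)⁻¹, hrel, Quotient.out q, hmem, by group⟩

lemma hfinite_mono {D E : Set G} (hE : HFinite H E) (hsub : D ⊆ E) : HFinite H D := by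
  obtain ⟨R, hRfin, hR⟩ := hE
  exact ⟨R, hRfin, hsub.trans hR⟩

lemma hfinite_union {D E : Set G} (hD : HFinite H D) (hE : HFinite H E) :
    HFinite H (D ∪ E) := by
  obtain ⟨R, hRfin, hR⟩ := hD
  obtain ⟨R', hRfin', hR'⟩ := hE
  refine ⟨R ∪ R', hRfin.union hRfin', ?_⟩
  rintro x (hx | hx)
  · obtain ⟨h, hh, b, hb, rfl⟩ := hR hx
    exact ⟨h, hh, b, Set.mem_union_left _ hb, rfl⟩
  · obtain ⟨h, hh, b, hb, rfl⟩ := hR' hx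
    exact ⟨h, hh, b, Set.mem_union_right _ hb, rfl⟩

end Coset
section Ends

open scoped symmDiff

variable {G : Type*} [Group G] {H : Subgroup G}

open Classical in
noncomputable def indFun {α : Type*} (A : Set α) : α → ZMod 2 :=
  fun a => if a ∈ A then 1 else 0

lemma indFun_support {α : Type*} (A : Set α) : {a : α | indFun A a ≠ 0} = A := by
  ext a
  by_cases h : a ∈ A <;> simp [indFun, h]

lemma rcosMul_one (q : RightCoset H) : rcosMul H 1 q = q := by
  induction q using Quotient.inductionOn' with
  | h x => simp [rcosMul, Quotient.map'_mk'']

lemma rcosMul_inv_mem_iff (g : G) (q : RightCoset H) (𝒜 : Set (RightCoset H)) :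
    rcosMul H g⁻¹ q ∈ 𝒜 ↔ q ∈ rcosMul H g '' 𝒜 := by
  constructor
  · intro h
    exact ⟨rcosMul H g⁻¹ q, h, by rw [rcosMul_rcosMul, inv_mul_cancel, rcosMul_one]⟩
  · rintro ⟨p, hp, rfl⟩
    rwa [rcosMul_rcosMul, mul_inv_cancel, rcosMul_one]

lemma endsMap_mk (g : G) (f : RightCoset H → ZMod 2) :
    endsMap H g (Submodule.Quotient.mk f) =
      Submodule.Quotient.mk (fun q => f (rcosMul H g⁻¹ q)) := by
  rw [endsMap, Submodule.mapQ_apply]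
  rfl

lemma zmod2_sub_ne_zero (a b : ZMod 2) : a - b ≠ 0 ↔ a ≠ b := by
  constructor
  · intro h he
    exact h (by rw [he, sub_self])
  · intro h he
    exact h (by linear_combination he)

lemma indFun_fixed_iff (𝒜 : Set (RightCoset H)) :
    Submodule.Quotient.mk (p := finiteSupport (RightCoset H)) (indFun 𝒜) ∈ endsFixed H ↔
      ∀ g : G, ((rcosMul H g '' 𝒜) ∆ 𝒜).Finite := by
  have key : ∀ g : G, ((fun q => indFun 𝒜 (rcosMul H g⁻¹ q)) - indFun 𝒜 ∈
      finiteSupport (RightCoset H)) ↔ ((rcosMul H g '' 𝒜) ∆ 𝒜).Finite := by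
    intro g
    have hset : {q : RightCoset H |
        ((fun q => indFun 𝒜 (rcosMul H g⁻¹ q)) - indFun 𝒜) q ≠ 0} =
        (rcosMul H g '' 𝒜) ∆ 𝒜 := by
      ext q
      simp only [Pi.sub_apply, Set.mem_setOf_eq, zmod2_sub_ne_zero, Set.mem_symmDiff]
      rw [← rcosMul_inv_mem_iff g q 𝒜]
      by_cases h1 : rcosMul H g⁻¹ q ∈ 𝒜 <;> by_cases h2 : q ∈ 𝒜 <;>
        simp [indFun, h1, h2, (by decide : (1 : ZMod 2) ≠ 0)]
    constructor
    · intro h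
      have : {q : RightCoset H |
          ((fun q => indFun 𝒜 (rcosMul H g⁻¹ q)) - indFun 𝒜) q ≠ 0}.Finite := h
      rwa [hset] at this
    · intro h
      show {q : RightCoset H |
          ((fun q => indFun 𝒜 (rcosMul H g⁻¹ q)) - indFun 𝒜) q ≠ 0}.Finite
      rwa [hset]
  constructor
  · intro hfix g
    have := hfix g
    rw [endsMap_mk] at this
    rw [← key g]
    exact (Submodule.Quotient.eq _).mp this
  · intro h g
    rw [endsMap_mk, Submodule.Quotient.eq]
    exact (key g).mpr (h g)

lemma mk_eq_zero_iff_finite (f : RightCoset H → ZMod 2) :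
    Submodule.Quotient.mk (p := finiteSupport (RightCoset H)) f = 0 ↔
      {q : RightCoset H | f q ≠ 0}.Finite := by
  rw [Submodule.Quotient.mk_eq_zero]
  rfl

end Ends
section Forward

open scoped symmDiff

variable {G : Type*} [Group G] [MetricSpace G] {S : Set G} {H : Subgroup G}

lemma nbhd_mono {X : Type*} [PseudoMetricSpace X] {r r' : ℝ≥0} (h : r ≤ r') (A : Set X) :
    nbhd r A ⊆ nbhd r' A := by
  rintro x ⟨a, ha, hd⟩
  exact ⟨a, ha, hd.trans h⟩

lemma image_symmDiff_subset {α β : Type*} (f : α → β) (X Y : Set α) :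
    (f '' X) ∆ (f '' Y) ⊆ f '' (X ∆ Y) := by
  rintro q hq
  rw [Set.mem_symmDiff] at hq
  rcases hq with ⟨⟨x, hx, rfl⟩, hq2⟩ | ⟨⟨x, hx, rfl⟩, hq2⟩
  · exact ⟨x, Set.mem_symmDiff.mpr (Or.inl ⟨hx, fun h => hq2 ⟨x, h, rfl⟩⟩), rfl⟩
  · exact ⟨x, Set.mem_symmDiff.mpr (Or.inr ⟨hx, fun h => hq2 ⟨x, h, rfl⟩⟩), rfl⟩

lemma hfinite_rtranslate {D : Set G} (hD : HFinite H D) (g : G) :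
    HFinite H ((· * g) '' D) := by
  obtain ⟨R, hRfin, hsub⟩ := hD
  refine ⟨(· * g) '' R, hRfin.image _, ?_⟩
  rintro x ⟨y, hy, rfl⟩
  obtain ⟨h, hh, b, hb, rfl⟩ := hsub hy
  exact ⟨h, hh, b * g, ⟨b, hb, rfl⟩, (mul_assoc h b g).symm⟩

lemma rcosMul_comp_image (a b : G) (𝒜 : Set (RightCoset H)) :
    rcosMul H (a * b) '' 𝒜 = rcosMul H b '' (rcosMul H a '' 𝒜) := by
  rw [Set.image_image]
  exact Set.image_congr' fun q => (rcosMul_rcosMul H b a q).symm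

lemma rcosMul_one_eq_id : rcosMul H (1 : G) = id := funext rcosMul_one

lemma rcosMul_inv_image (a : G) (𝒜 : Set (RightCoset H)) :
    rcosMul H a⁻¹ '' (rcosMul H a '' 𝒜) = 𝒜 := by
  rw [← rcosMul_comp_image, mul_inv_cancel, rcosMul_one_eq_id, Set.image_id]

/-- generator step: `Cs \ C ⊆ N_{A+1}(H)` for a CCC `C`. -/
lemma gen_step (hS : Subgroup.closure S = ⊤) (hword : IsWordMetric S)
    {r A : ℝ≥0} (hr : 1 ≤ r) {C : Set G} (hccc : IsCCC r A (H : Set G) C)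
    {s : G} (hs : wordLength S s ≤ 1) :
    (· * s) '' C \ C ⊆ nbhd (A + 1) (H : Set G) := by
  rintro x ⟨⟨c, hc, rfl⟩, hnc⟩
  have hd : nndist (c * s) c ≤ 1 := by
    rw [nndist_le_iff_wordLength hword]
    have he : (c * s)⁻¹ * c = s⁻¹ := by group
    rw [he, wordLength_inv hS]
    exact_mod_cast hs
  by_cases hcA : c ∈ nbhd A (H : Set G)
  · obtain ⟨h, hh, hch⟩ := hcA
    exact ⟨h, hh, (nndist_triangle (c * s) c h).trans (by
      calc nndist (c * s) c + nndist c h ≤ 1 + A := add_le_add hd hch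
        _ = A + 1 := add_comm 1 A)⟩
  · have hbd : c * s ∈ coarseBoundary r (C \ nbhd A (H : Set G)) :=
      ⟨fun h => hnc h.1, c, ⟨hc, hcA⟩, hd.trans hr⟩
    exact nbhd_mono (le_add_of_nonneg_right zero_le') _ (hccc hbd)

lemma rcosMul_image_eq (g : G) (C : Set G) :
    rcosMul H g '' ((Quotient.mk'' : G → RightCoset H) '' C) =
      (Quotient.mk'' : G → RightCoset H) '' ((· * g) '' C) := by
  rw [Set.image_image, Set.image_image]
  rfl

/-- almost invariance of the coset image of a CCC -/
lemma ccc_almost_invariant (hSfin : S.Finite) (hS : Subgroup.closure S = ⊤)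
    (hword : IsWordMetric S) {C : Set G}
    (hccc : IsCoarseCompComplement (H : Set G) C) (g : G) :
    ((rcosMul H g '' ((Quotient.mk'' : G → RightCoset H) '' C)) ∆
      ((Quotient.mk'' : G → RightCoset H) '' C)).Finite := by
  obtain ⟨r, A, hr, hC⟩ := hccc
  set 𝒜 : Set (RightCoset H) := (Quotient.mk'' : G → RightCoset H) '' C with h𝒜
  have hstep : ∀ s : G, wordLength S s ≤ 1 → ((rcosMul H s '' 𝒜) ∆ 𝒜).Finite := by
    intro s hs
    have h1 : (· * s) '' C \ C ⊆ nbhd (A + 1) (H : Set G) := gen_step hS hword hr hC hs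
    have h1' : (· * s⁻¹) '' C \ C ⊆ nbhd (A + 1) (H : Set G) :=
      gen_step hS hword hr hC (by rwa [wordLength_inv hS])
    have h2 : C \ (· * s) '' C = (· * s) '' ((· * s⁻¹) '' C \ C) := by
      ext x
      simp only [Set.mem_diff, Set.mem_image]
      constructor
      · rintro ⟨hx, hnx⟩
        refine ⟨x * s⁻¹, ⟨⟨x, hx, by group⟩, ?_⟩, by group⟩
        intro hmem
        exact hnx ⟨x * s⁻¹, hmem, by group⟩
      · rintro ⟨y, ⟨⟨z, hz, rfl⟩, hny⟩, rfl⟩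
        refine ⟨by simpa using hz, ?_⟩
        rintro ⟨w, hw, hww⟩
        have hwz : w = z * s⁻¹ := mul_right_cancel (b := s) (by simpa using hww)
        exact hny (hwz ▸ hw)
    have hfin : HFinite H (((· * s) '' C) ∆ C) := by
      rw [Set.symmDiff_def]
      refine hfinite_union (hfinite_mono (hfinite_nbhd hSfin hS hword H (A + 1)) h1) ?_
      rw [h2]
      exact hfinite_rtranslate (hfinite_mono (hfinite_nbhd hSfin hS hword H (A + 1)) h1') s
    have hsub : ((rcosMul H s '' 𝒜) ∆ 𝒜) ⊆
        (Quotient.mk'' : G → RightCoset H) '' (((· * s) '' C) ∆ C) := by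
      rw [h𝒜, rcosMul_image_eq]
      exact image_symmDiff_subset _ _ _
    exact (image_finite_of_hfinite hfin).subset hsub
  have hg : g ∈ Subgroup.closure S := by rw [hS]; trivial
  induction hg using Subgroup.closure_induction with
  | mem x hx =>
    exact hstep x (wordLength_le (l := [x]) (by simpa using Or.inl hx) (by simp))
  | one =>
    rw [rcosMul_one_eq_id, Set.image_id, symmDiff_self]
    exact Set.finite_empty
  | mul a b ha hb iha ihb =>
    have hsub : (rcosMul H (a * b) '' 𝒜) ∆ 𝒜 ⊆
        ((rcosMul H b '' (rcosMul H a '' 𝒜)) ∆ (rcosMul H b '' 𝒜)) ∪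
          ((rcosMul H b '' 𝒜) ∆ 𝒜) := by
      rw [rcosMul_comp_image]
      exact symmDiff_triangle _ _ _
    refine (Set.Finite.union ?_ ihb).subset hsub
    exact (iha.image (rcosMul H b)).subset (image_symmDiff_subset _ _ _)
  | inv a ha iha =>
    have h1 : (rcosMul H a⁻¹ '' 𝒜) ∆ 𝒜 =
        (rcosMul H a⁻¹ '' 𝒜) ∆ (rcosMul H a⁻¹ '' (rcosMul H a '' 𝒜)) := by
      rw [rcosMul_inv_image]
    have h2 : ((𝒜 ∆ (rcosMul H a '' 𝒜))).Finite := by rwa [symmDiff_comm]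
    rw [h1]
    exact (h2.image (rcosMul H a⁻¹)).subset (image_symmDiff_subset _ _ _)

end Forward
section ForwardMain

open scoped symmDiff

variable {G : Type*} [Group G] [MetricSpace G] {S : Set G} {H : Subgroup G}

lemma zmod2_ne_zero_eq_one : ∀ a : ZMod 2, a ≠ 0 → a = 1 := by decide

lemma image_inter_subset_of_inv {C D : Set G} (hC : (H : Set G) * C = C) :
    ((Quotient.mk'' : G → RightCoset H) '' C) ∩ ((Quotient.mk'' : G → RightCoset H) '' D) ⊆
      (Quotient.mk'' : G → RightCoset H) '' (C ∩ D) := by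
  rintro q ⟨⟨x, hx, hqx⟩, ⟨y, hy, hqy⟩⟩
  have hxy : (Quotient.mk'' x : RightCoset H) = Quotient.mk'' y := by rw [hqx, hqy]
  have hmem : y * x⁻¹ ∈ H := (rcos_mk_eq_iff x y).mp hxy
  have hyC : y ∈ C := by
    rw [← hC]
    exact ⟨y * x⁻¹, hmem, x, hx, by group⟩
  exact ⟨y, ⟨hyC, hy⟩, hqy⟩

lemma forward_dir (hSfin : S.Finite) (hSgen : Subgroup.closure S = ⊤)
    (hword : IsWordMetric S) (H : Subgroup G) (n : ℕ) (C : Fin n → Set G)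
    (h1 : ∀ i, IsCoarseCompComplement (H : Set G) (C i))
    (h2 : ∀ i, ¬ IsShallow (H : Set G) (C i))
    (h3 : ∀ i j : Fin n, i ≠ j → IsShallow (H : Set G) (C i ∩ C j))
    (h4 : ∀ i, (H : Set G) * C i = C i) :
    (n : Cardinal) ≤ Module.rank (ZMod 2) ↥(endsFixed H) := by
  set 𝒜 : Fin n → Set (RightCoset H) := fun i => (Quotient.mk'' : G → RightCoset H) '' C i
    with h𝒜
  have hfix : ∀ i, Submodule.Quotient.mk (p := finiteSupport (RightCoset H))
      (indFun (𝒜 i)) ∈ endsFixed H := fun i =>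
    (indFun_fixed_iff (𝒜 i)).mpr (fun g => ccc_almost_invariant hSfin hSgen hword (h1 i) g)
  have hinf : ∀ i, (𝒜 i).Infinite := by
    intro i hfin
    exact h2 i ((shallow_iff_hfinite hSfin hSgen hword H (C i)).mpr
      (hfinite_of_image_finite hfin))
  have hij : ∀ i j : Fin n, i ≠ j → (𝒜 i ∩ 𝒜 j).Finite := by
    intro i j hne
    refine (image_finite_of_hfinite
      ((shallow_iff_hfinite hSfin hSgen hword H _).mp (h3 i j hne))).subset ?_
    exact image_inter_subset_of_inv (h4 i)
  -- linear independence in the quotient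
  have hv : LinearIndependent (ZMod 2)
      (fun i => Submodule.Quotient.mk (p := finiteSupport (RightCoset H)) (indFun (𝒜 i))) := by
    rw [Fintype.linearIndependent_iff]
    intro g hg i₀
    by_contra hne
    have hg1 : g i₀ = 1 := zmod2_ne_zero_eq_one _ hne
    have hsum : Submodule.Quotient.mk (p := finiteSupport (RightCoset H))
        (∑ i, g i • indFun (𝒜 i)) = 0 := by
      rw [← hg]
      simp only [← Submodule.mkQ_apply, ← map_smul, ← map_sum]
    have hfin : {q : RightCoset H | (∑ i, g i • indFun (𝒜 i)) q ≠ 0}.Finite :=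
      (mk_eq_zero_iff_finite _).mp hsum
    set D : Set (RightCoset H) := 𝒜 i₀ \ ⋃ j ∈ ({j : Fin n | j ≠ i₀}), (𝒜 i₀ ∩ 𝒜 j) with hD
    have hDinf : D.Infinite := by
      refine (hinf i₀).diff (Set.Finite.biUnion (Set.toFinite _) ?_)
      intro j hj
      exact hij i₀ j (Ne.symm hj)
    refine hDinf (hfin.subset ?_)
    intro q hq
    obtain ⟨hq0, hq1⟩ := hq
    have hnot : ∀ j : Fin n, j ≠ i₀ → q ∉ 𝒜 j := by
      intro j hj hmem
      exact hq1 (Set.mem_biUnion hj ⟨hq0, hmem⟩)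
    have heval : (∑ i, g i • indFun (𝒜 i)) q = g i₀ := by
      rw [Finset.sum_apply]
      rw [Finset.sum_eq_single i₀]
      · simp [indFun, hq0]
      · intro j _ hj
        simp [indFun, hnot j hj]
      · intro h
        exact absurd (Finset.mem_univ i₀) h
    show q ∈ {q : RightCoset H | (∑ i, g i • indFun (𝒜 i)) q ≠ 0}
    rw [Set.mem_setOf_eq, heval, hg1]
    decide
  -- transfer to the fixed subspace
  have hw : LinearIndependent (ZMod 2)
      (fun i => (⟨Submodule.Quotient.mk (indFun (𝒜 i)), hfix i⟩ : ↥(endsFixed H))) := by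
    apply LinearIndependent.of_comp ((endsFixed H).subtype)
    exact hv
  simpa using hw.cardinal_lift_le_rank

end ForwardMain
section BackwardPrep

open scoped symmDiff

variable {G : Type*} [Group G] [MetricSpace G] {S : Set G} {H : Subgroup G}

lemma preimage_invariant (ℬ : Set (RightCoset H)) :
    (H : Set G) * ((Quotient.mk'' : G → RightCoset H) ⁻¹' ℬ) =
      (Quotient.mk'' : G → RightCoset H) ⁻¹' ℬ := by
  ext x
  constructor
  · rintro ⟨h, hh, y, hy, rfl⟩
    show (Quotient.mk'' (h * y) : RightCoset H) ∈ ℬ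
    rwa [rcos_mk_smul hh]
  · intro hx
    exact ⟨1, H.one_mem, x, hx, one_mul x⟩

lemma image_preimage_rcos (ℬ : Set (RightCoset H)) :
    (Quotient.mk'' : G → RightCoset H) '' ((Quotient.mk'' : G → RightCoset H) ⁻¹' ℬ) = ℬ :=
  Set.image_preimage_eq ℬ Quotient.mk''_surjective

lemma translate_preimage (s : G) (ℬ : Set (RightCoset H)) :
    (· * s) '' ((Quotient.mk'' : G → RightCoset H) ⁻¹' ℬ) =
      (Quotient.mk'' : G → RightCoset H) ⁻¹' (rcosMul H s '' ℬ) := by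
  ext x
  constructor
  · rintro ⟨y, hy, rfl⟩
    show rcosMul H s (Quotient.mk'' y) ∈ rcosMul H s '' ℬ
    exact ⟨Quotient.mk'' y, hy, rfl⟩
  · intro hx
    refine ⟨x * s⁻¹, ?_, by group⟩
    show (Quotient.mk'' (x * s⁻¹) : RightCoset H) ∈ ℬ
    have : (Quotient.mk'' (x * s⁻¹) : RightCoset H) = rcosMul H s⁻¹ (Quotient.mk'' x) := rfl
    rw [this, rcosMul_inv_mem_iff]
    exact hx

/-- an almost invariant subset of `H\G` pulls back to a coarse complementary component -/
lemma almostinv_to_ccc (hSfin : S.Finite) (hS : Subgroup.closure S = ⊤)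
    (hword : IsWordMetric S) {ℬ : Set (RightCoset H)}
    (hae : ∀ g : G, ((rcosMul H g '' ℬ) ∆ ℬ).Finite) :
    IsCoarseCompComplement (H : Set G)
      ((Quotient.mk'' : G → RightCoset H) ⁻¹' ℬ) := by
  classical
  set C : Set G := (Quotient.mk'' : G → RightCoset H) ⁻¹' ℬ with hC
  set E : Set G := ⋃ s ∈ (S ∪ S⁻¹ : Set G), ((· * s) '' C \ C) with hE
  have hEfin : HFinite H E := by
    apply hfinite_of_image_finite
    rw [Set.image_iUnion₂]
    apply Set.Finite.biUnion (hSfin.union hSfin.inv)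
    intro s _
    refine (hae s).subset ?_
    rw [Set.image_subset_iff]
    intro x hx
    obtain ⟨hx1, hx2⟩ := hx
    rw [translate_preimage] at hx1
    show Quotient.mk'' x ∈ (rcosMul H s '' ℬ) ∆ ℬ
    rw [Set.mem_symmDiff]
    exact Or.inl ⟨hx1, hx2⟩
  obtain ⟨A', hA'⟩ := hfinite_subset_nbhd hword hS hEfin
  refine ⟨1, A', le_refl 1, ?_⟩
  rintro x ⟨hnx, c, ⟨hc, hcA⟩, hd⟩
  -- wordLength (x⁻¹ c) ≤ 1
  have hwl : wordLength S (x⁻¹ * c) ≤ 1 := by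
    rw [nndist_le_iff_wordLength hword] at hd
    exact_mod_cast hd
  obtain ⟨l, hl, hp, hlen⟩ := exists_wordLength_list hS (x⁻¹ * c)
  by_cases hxC : x ∈ C
  · -- then x ∈ nbhd, since x ∉ C \ nbhd
    by_contra hxA
    exact hxA (by_contra fun h => (hnx ⟨hxC, h⟩))
  · -- x = c * u⁻¹ for u = x⁻¹ c of word length ≤ 1
    have hlen1 : l.length ≤ 1 := hlen.symm ▸ (hlen ▸ (hlen.le.trans (hwl.trans le_rfl)))
    match l, hl, hp, hlen1 with
    | [], _, hp, _ =>
      exfalso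
      have hxc : x = c := by
        have h1 : x⁻¹ * c = 1 := by simpa using hp.symm
        have := eq_of_inv_mul_eq_one h1
        exact this
      exact hxC (hxc ▸ hc)
    | [u], hl, hp, _ =>
      have hu : u ∈ S ∨ u⁻¹ ∈ S := hl u (by simp)
      have hcu : x⁻¹ * c = u := by simpa using hp.symm
      have hx : x = c * u⁻¹ := by rw [← hcu]; group
      have huinv : u⁻¹ ∈ S ∪ S⁻¹ := by
        rcases hu with h | h
        · exact Set.mem_union_right _ (Set.mem_inv.mpr (by simpa using h))
        · exact Set.mem_union_left _ h
      have hxE : x ∈ E :=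
        Set.mem_biUnion huinv ⟨⟨c, hc, hx.symm⟩, hxC⟩
      exact hA' hxE

end BackwardPrep
section BackwardMain

open scoped symmDiff

variable {G : Type*} [Group G] [MetricSpace G] {S : Set G} {H : Subgroup G}

lemma zmod2_cases : ∀ a : ZMod 2, a = 0 ∨ a = 1 := by decide

lemma zmod2_one_ne_zero : (1 : ZMod 2) ≠ 0 := by decide

lemma backward_dir (hSfin : S.Finite) (hSgen : Subgroup.closure S = ⊤)
    (hword : IsWordMetric S) (H : Subgroup G) (n : ℕ)
    (hrank : (n : Cardinal) ≤ Module.rank (ZMod 2) ↥(endsFixed H)) :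
    ∃ C : Fin n → Set G,
      (∀ i, IsCoarseCompComplement (H : Set G) (C i)) ∧
      (∀ i, ¬ IsShallow (H : Set G) (C i)) ∧
      (∀ i j : Fin n, i ≠ j → IsShallow (H : Set G) (C i ∩ C j)) ∧
      ∀ i, (H : Set G) * C i = C i := by
  classical
  haveI : Fact (Nat.Prime 2) := ⟨Nat.prime_two⟩
  haveI hfree : Module.Free (ZMod 2)
      ((RightCoset H → ZMod 2) ⧸ finiteSupport (RightCoset H)) :=
    Module.Free.of_divisionRing _ _
  haveI hfree2 : Module.Free (ZMod 2) ↥(endsFixed H) := Module.Free.of_divisionRing _ _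
  obtain ⟨sf, hcard, hind⟩ := le_rank_iff_exists_linearIndependent_finset.mp hrank
  let e : Fin n ≃ {x : ↥(endsFixed H) // x ∈ (sf : Set ↥(endsFixed H))} :=
    ((sf.equivFin).trans (finCongr hcard)).symm
  have hw : LinearIndependent (ZMod 2)
      (fun i : Fin n => ((e i : {x : ↥(endsFixed H) // x ∈ (sf : Set ↥(endsFixed H))}) :
        ↥(endsFixed H))) := hind.comp e e.injective
  set w : Fin n → ↥(endsFixed H) := fun i => (e i : ↥(endsFixed H)) with hwdef
  -- pass to the quotient vectors
  set v : Fin n → ((RightCoset H → ZMod 2) ⧸ finiteSupport (RightCoset H)) :=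
    fun i => (w i : (RightCoset H → ZMod 2) ⧸ finiteSupport (RightCoset H)) with hvdef
  have hv : LinearIndependent (ZMod 2) v :=
    hw.map' (endsFixed H).subtype (Submodule.ker_subtype _)
  -- representatives
  have hrep : ∀ i, ∃ f : RightCoset H → ZMod 2, Submodule.Quotient.mk f = v i :=
    fun i => Submodule.Quotient.mk_surjective _ (v i)
  choose f hf using hrep
  set A : Fin n → Set (RightCoset H) := fun i => {q | f i q ≠ 0} with hAdef
  have hIndA : ∀ i, indFun (A i) = f i := by
    intro i
    funext q
    rcases zmod2_cases (f i q) with h | h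
    · simp [indFun, hAdef, h]
    · simp [indFun, hAdef, h, zmod2_one_ne_zero]
  have hA_ae : ∀ i, ∀ g : G, ((rcosMul H g '' A i) ∆ (A i)).Finite := by
    intro i
    refine (indFun_fixed_iff (A i)).mp ?_
    rw [hIndA i, hf i]
    exact (w i).2
  -- atoms
  set atomOf : RightCoset H → (Fin n → Bool) := fun q i => decide (q ∈ A i) with hatom
  set B : (Fin n → Bool) → Set (RightCoset H) :=
    fun ε => {q | ∀ i, q ∈ A i ↔ ε i = true} with hBdef
  have hmem_atom : ∀ q, q ∈ B (atomOf q) := by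
    intro q i
    simp [hatom]
  have hatom_unique : ∀ {q ε}, q ∈ B ε → ε = atomOf q := by
    intro q ε hq
    funext i
    have := hq i
    by_cases h : q ∈ A i
    · simp [hatom, h, (this.mp h)]
    · have : ε i ≠ true := fun he => h (this.mpr he)
      simp [hatom, h]
      simpa using this
  have hBdisj : ∀ {ε ε' : Fin n → Bool}, ε ≠ ε' → B ε ∩ B ε' = ∅ := by
    intro ε ε' hne
    ext q
    simp only [Set.mem_inter_iff, Set.mem_empty_iff_false, iff_false]
    rintro ⟨h1, h2⟩
    exact hne ((hatom_unique h1).trans (hatom_unique h2).symm)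
  have hBae : ∀ (ε : Fin n → Bool) (g : G), ((rcosMul H g '' B ε) ∆ (B ε)).Finite := by
    intro ε g
    have hsub : (rcosMul H g '' B ε) ∆ (B ε) ⊆
        ⋃ i : Fin n, ((rcosMul H g '' A i) ∆ (A i)) := by
      intro q hq
      rw [Set.mem_symmDiff] at hq
      have hagree : (∀ i, (rcosMul H g⁻¹ q ∈ A i ↔ q ∈ A i)) → False := by
        intro hag
        have hBiff : rcosMul H g⁻¹ q ∈ B ε ↔ q ∈ B ε := by
          constructor
          · intro h i
            rw [← hag i]
            exact h i
          · intro h i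
            rw [hag i]
            exact h i
        rcases hq with ⟨h1, h2⟩ | ⟨h1, h2⟩
        · rw [← rcosMul_inv_mem_iff] at h1
          exact h2 (hBiff.mp h1)
        · rw [← rcosMul_inv_mem_iff] at h2
          exact h2 (hBiff.mpr h1)
      by_contra hnot
      apply hagree
      intro i
      by_contra hdis
      apply hnot
      refine Set.mem_iUnion.mpr ⟨i, ?_⟩
      rw [Set.mem_symmDiff, ← rcosMul_inv_mem_iff]
      tauto
    exact (Set.finite_iUnion (fun i : Fin n => hA_ae i g)).subset hsub
  -- decomposition of indicator functions
  have hsum : ∀ i, indFun (A i) =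
      ∑ ε ∈ Finset.univ.filter (fun ε : Fin n → Bool => ε i = true), indFun (B ε) := by
    intro i
    funext q
    rw [Finset.sum_apply]
    by_cases hq : q ∈ A i
    · rw [Finset.sum_eq_single_of_mem (atomOf q)]
      · simp [indFun, hq, hmem_atom q]
      · simp only [Finset.mem_filter, Finset.mem_univ, true_and, hatom]
        simp [hq]
      · intro ε hε hne
        have : q ∉ B ε := fun h => hne (hatom_unique h)
        simp [indFun, this]
    · have h0 : indFun (A i) q = 0 := by simp [indFun, hq]
      rw [h0]
      symm
      apply Finset.sum_eq_zero
      intro ε hε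
      have hεi : ε i = true := (Finset.mem_filter.mp hε).2
      have : q ∉ B ε := by
        intro h
        rw [hatom_unique h] at hεi
        simp [hatom, hq] at hεi
      simp [indFun, this]
  -- the set of infinite atoms
  set T : Set (Fin n → Bool) := {ε | (B ε).Infinite} with hT
  set u : (Fin n → Bool) → ((RightCoset H → ZMod 2) ⧸ finiteSupport (RightCoset H)) :=
    fun ε => Submodule.Quotient.mk (indFun (B ε)) with hu
  have hspan : ∀ i, v i ∈ Submodule.span (ZMod 2) (u '' T) := by
    intro i
    have hvi : v i = ∑ ε ∈ Finset.univ.filter (fun ε : Fin n → Bool => ε i = true), u ε := by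
      rw [← hf i, ← hIndA i, hsum i]
      simp only [hu, ← Submodule.mkQ_apply, map_sum]
    rw [hvi]
    apply Submodule.sum_mem
    intro ε hε
    by_cases hinfin : ε ∈ T
    · exact Submodule.subset_span ⟨ε, hinfin, rfl⟩
    · have hfin : (B ε).Finite := Set.not_infinite.mp hinfin
      have : u ε = 0 := by
        rw [hu]
        rw [mk_eq_zero_iff_finite]
        rwa [indFun_support]
      rw [this]
      exact Submodule.zero_mem _
  -- cardinality bound
  have hnT : (n : Cardinal) ≤ Cardinal.mk ↥T := by
    have hv' : LinearIndependent (ZMod 2)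
        (fun i => (⟨v i, hspan i⟩ : ↥(Submodule.span (ZMod 2) (u '' T)))) := by
      apply LinearIndependent.of_comp (Submodule.span (ZMod 2) (u '' T)).subtype
      exact hv
    have h1 : (n : Cardinal) ≤ Module.rank (ZMod 2) ↥(Submodule.span (ZMod 2) (u '' T)) := by
      simpa using hv'.cardinal_lift_le_rank
    have h2 := rank_span_le (R := ZMod 2) (u '' T)
    have h3 := Cardinal.mk_image_le_lift (f := u) (s := T)
    rw [Cardinal.lift_uzero] at h3
    have h4 : (n : Cardinal) ≤ Cardinal.lift (Cardinal.mk ↥T) := (h1.trans h2).trans h3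
    exact Cardinal.nat_le_lift_iff.mp h4
  have hemb : Nonempty (Fin n ↪ ↥T) := by
    rw [← Cardinal.mk_fin n, Cardinal.le_def] at hnT
    exact hnT
  obtain ⟨emb⟩ := hemb
  -- the components
  refine ⟨fun i => (Quotient.mk'' : G → RightCoset H) ⁻¹' (B ((emb i : ↥T) : Fin n → Bool)),
    ?_, ?_, ?_, ?_⟩
  · intro i
    exact almostinv_to_ccc hSfin hSgen hword (hBae _)
  · intro i hsh
    have hfin := image_finite_of_hfinite
      ((shallow_iff_hfinite hSfin hSgen hword H _).mp hsh)
    rw [image_preimage_rcos] at hfin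
    exact (emb i).2 hfin
  · intro i j hne
    have hvalne : ((emb i : ↥T) : Fin n → Bool) ≠ ((emb j : ↥T) : Fin n → Bool) := by
      intro h
      exact hne (emb.injective (Subtype.ext h))
    have : (Quotient.mk'' : G → RightCoset H) ⁻¹' (B ((emb i : ↥T) : Fin n → Bool)) ∩
        (Quotient.mk'' : G → RightCoset H) ⁻¹' (B ((emb j : ↥T) : Fin n → Bool)) = ∅ := by
      rw [← Set.preimage_inter, hBdisj hvalne, Set.preimage_empty]
    rw [this]
    exact ⟨0, fun x hx => absurd hx (Set.notMem_empty x)⟩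
  · intro i
    exact preimage_invariant _

end BackwardMain
/-- Let `G` be a group with the word metric with respect to a finite
generating set `S`, `H ≤ G` a subgroup, and `n : ℕ`. Then `e(G,H) ≥ n` iff there exist
`n` deep, pairwise coarse disjoint, coarse complementary components `C₁, …, Cₙ` of `H`
with `H·Cᵢ = Cᵢ` for each `i`. -/
theorem ends_ge_iff_invariant_components {G : Type*} [Group G] [MetricSpace G]
    (S : Set G) (hSfin : S.Finite) (hSgen : Subgroup.closure S = ⊤)
    (hword : IsWordMetric S) (H : Subgroup G) (n : ℕ) :
    (n : Cardinal) ≤ Module.rank (ZMod 2) ↥(endsFixed H) ↔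
      ∃ C : Fin n → Set G,
        (∀ i, IsCoarseCompComplement (H : Set G) (C i)) ∧
        (∀ i, ¬ IsShallow (H : Set G) (C i)) ∧
        (∀ i j : Fin n, i ≠ j → IsShallow (H : Set G) (C i ∩ C j)) ∧
        ∀ i, (H : Set G) * C i = C i := by
  constructor
  · exact backward_dir hSfin hSgen hword H n
  · rintro ⟨C, h1, h2, h3, h4⟩
    exact forward_dir hSfin hSgen hword H n C h1 h2 h3 h4
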